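/- Let p_n ∈ ℤ[z] be defined by p_0 = 0 and p_{n+1} = p_n^2 + z, and for ℓ, n ∈ ℕ set q_{ℓ,n} = p_{ℓ+n} − p_ℓ. For every ℓ ≥ 2 and n ≥ 1, the quotient s_{ℓ,n} = q_{ℓ,n} / q_{ℓ−1,n} satisfies s_{ℓ,n} = p_{ℓ+n−1} + p_{ℓ−1} and, over ℂ, s_{ℓ,n}(z) = ( ∏_{k | gcd(n, ℓ−1)} h_k(z) ) · ( ∏_{k | n} m_{ℓ,k}(z) ). -/

import Mathlib

open Polynomial

/-- The polynomials `p n` defined by `p 0 = 0`, `p (n+1) = p n ^ 2 + X`. -/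
noncomputable def P : ℕ → Polynomial ℤ
  | 0 => 0
  | n + 1 => P n ^ 2 + X

/-- The Misiurewicz–Thurston polynomials `q l n = p (l + n) - p l`. -/
noncomputable def Q (l n : ℕ) : Polynomial ℤ := P (l + n) - P l

/-- `p n` viewed over `ℂ`. -/
noncomputable def pC (n : ℕ) : Polynomial ℂ := (P n).map (Int.castRingHom ℂ)

/-- `q l n` viewed over `ℂ`. -/
noncomputable def qC (l n : ℕ) : Polynomial ℂ := (Q l n).map (Int.castRingHom ℂ)

/-- Hyperbolic centers of order `n`: roots of `p n` that are not roots of `p k`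
for any strict divisor `k` of `n`. -/
def hyp (n : ℕ) : Set ℂ :=
  {z | (pC n).eval z = 0 ∧ ∀ k : ℕ, k ∣ n → k ≠ n → (pC k).eval z ≠ 0}

/-- Misiurewicz points of type `(l, n)`. -/
def mis (l n : ℕ) : Set ℂ :=
  {z | (qC l n).eval z = 0 ∧ (qC (l - 1) n).eval z ≠ 0 ∧
    ∀ k : ℕ, k ∣ n → k ≠ n → (qC l k).eval z ≠ 0}

/-- Gleason's polynomial `h n = ∏_{r ∈ hyp n} (X - r)`. -/
noncomputable def hPoly (n : ℕ) : Polynomial ℂ := ∏ᶠ r ∈ hyp n, (X - C r)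

/-- Reduced Misiurewicz polynomial `m l n = ∏_{r ∈ mis l n} (X - r)`. -/
noncomputable def mPoly (l n : ℕ) : Polynomial ℂ := ∏ᶠ r ∈ mis l n, (X - C r)

/-- The multiplicity `η l k = ⌊(l - 1)/k⌋ + 2`, with the conventions
`η 0 k = 1` (floor taken in `ℤ`) and `η 1 k = 2`. -/
def eta (l k : ℕ) : ℕ := if l = 0 then 1 else (l - 1) / k + 2

lemma P_zero : P 0 = 0 := rfl
lemma P_succ (m : ℕ) : P (m + 1) = P m ^ 2 + X := rfl

lemma P_monic_natDegree (m : ℕ) : (P (m+1)).Monic ∧ (P (m+1)).natDegree = 2 ^ m := by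
  induction m with
  | zero => simp [P_succ, P_zero, monic_X]
  | succ m ih =>
    obtain ⟨hm, hd⟩ := ih
    have hsq : (P (m+1) ^ 2).Monic := hm.pow 2
    have hdsq : (P (m+1) ^ 2).natDegree = 2 ^ (m+1) := by
      rw [natDegree_pow, hd, pow_succ, Nat.mul_comm]
    have hlt : (X : Polynomial ℤ).degree < (P (m+1) ^ 2).degree := by
      rw [degree_X, degree_eq_natDegree hsq.ne_zero, hdsq]
      exact_mod_cast Nat.one_lt_two_pow (by omega)
    refine ⟨hsq.add_of_left hlt, ?_⟩
    rw [P_succ, natDegree_add_eq_left_of_degree_lt hlt, hdsq]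

lemma P_monic {m : ℕ} (h : 1 ≤ m) : (P m).Monic := by
  obtain ⟨m, rfl⟩ := Nat.exists_eq_add_of_le h
  rw [Nat.add_comm]; exact (P_monic_natDegree m).1

lemma P_natDegree {m : ℕ} (h : 1 ≤ m) : (P m).natDegree = 2 ^ (m - 1) := by
  obtain ⟨m, rfl⟩ := Nat.exists_eq_add_of_le h
  rw [Nat.add_comm]; simpa using (P_monic_natDegree m).2

lemma P_degree_lt {a b : ℕ} (ha : 1 ≤ a) (hab : a < b) : (P a).degree < (P b).degree := by
  have hb : 1 ≤ b := le_trans ha hab.le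
  rw [degree_eq_natDegree (P_monic ha).ne_zero, degree_eq_natDegree (P_monic hb).ne_zero,
    P_natDegree ha, P_natDegree hb]
  exact_mod_cast Nat.pow_lt_pow_right one_lt_two (by omega)

/-- `S a n = P (a+n) + P a`, the quotient polynomial (over ℤ) with `l = a+1`. -/
noncomputable def S (a n : ℕ) : Polynomial ℤ := P (a + n) + P a

lemma S_monic {a n : ℕ} (ha : 1 ≤ a) (hn : 1 ≤ n) : (S a n).Monic :=
  (P_monic (by omega)).add_of_left (P_degree_lt ha (by omega))

lemma Q_factor (a n : ℕ) : P (a + 1 + n) - P (a + 1) = (P (a + n) - P a) * S a n := by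
  have h1 : a + 1 + n = (a + n) + 1 := by omega
  rw [h1, P_succ, P_succ, S]; ring

lemma Q_ne_zero {a n : ℕ} (ha : 1 ≤ a) (hn : 1 ≤ n) : P (a + n) - P a ≠ 0 := by
  refine sub_ne_zero_of_ne (fun h => ?_)
  have := P_degree_lt ha (show a < a + n by omega)
  rw [h] at this; exact lt_irrefl _ this

/-- mod 2: `P (j+n) + P j ≡ P n ^ (2^j)`. -/
lemma exists_pow (n : ℕ) : ∀ j : ℕ, ∃ g : Polynomial ℤ, P (j + n) + P j = P n ^ (2 ^ j) + 2 * g := by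
  intro j
  induction j with
  | zero => exact ⟨0, by simp [P_zero]⟩
  | succ j ih =>
    obtain ⟨g, hg⟩ := ih
    refine ⟨2 * (P n ^ (2 ^ j)) * g + 2 * g ^ 2 - P (j + n) * P j + X, ?_⟩
    have h1 : j + 1 + n = (j + n) + 1 := by omega
    have h2 : (2:ℕ) ^ (j+1) = 2 ^ j * 2 := pow_succ 2 j
    rw [h1, P_succ, P_succ, h2, pow_mul]
    linear_combination (P (j + n) + P j + P n ^ (2 ^ j) + 2 * g) * hg

lemma P_deriv_succ (m : ℕ) : derivative (P (m + 1)) = 2 * (P m * derivative (P m)) + 1 := by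
  rw [P_succ]
  simp [derivative_pow]
  ring

lemma exists_t (m : ℕ) : ∃ t : Polynomial ℤ, P m * derivative (P m) = P m + 2 * t := by
  cases m with
  | zero => exact ⟨0, by simp [P_zero]⟩
  | succ m =>
    -- derivative (P (m+1)) = 1 + 2 * (P m * derivative (P m))
    refine ⟨P (m + 1) * (P m * derivative (P m)), ?_⟩
    rw [P_deriv_succ]; ring

/-- derivative of S is `2 * (1 + P n ^ 2^b + 2 h)` where `a = b+1`. -/
lemma exists_h (b n : ℕ) : ∃ h : Polynomial ℤ,
    derivative (S (b + 1) n) = 2 * (1 + P n ^ (2 ^ b) + 2 * h) := by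
  obtain ⟨g, hg⟩ := exists_pow n b
  obtain ⟨t1, ht1⟩ := exists_t (b + n)
  obtain ⟨t2, ht2⟩ := exists_t b
  refine ⟨g + t1 + t2, ?_⟩
  have h1 : b + 1 + n = (b + n) + 1 := by omega
  rw [S, h1, derivative_add, P_deriv_succ, P_deriv_succ, ht1, ht2]
  linear_combination 2 * hg

lemma not_int_half : ¬ IsIntegral ℤ ((2:ℂ)⁻¹) := by
  intro h
  have h2 : ((2:ℂ))⁻¹ = algebraMap ℚ ℂ (2⁻¹) := by
    rw [map_inv₀]; norm_num
  rw [h2, isIntegral_algebraMap_iff (algebraMap ℚ ℂ).injective] at h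
  obtain ⟨y, hy⟩ := IsIntegrallyClosed.isIntegral_iff.mp h
  rw [algebraMap_int_eq] at hy
  have hy2 : (y : ℚ) = 2⁻¹ := by simpa using hy
  have hy' : ((2 * y : ℤ) : ℚ) = 1 := by push_cast [hy2]; norm_num
  have : (2 * y : ℤ) = 1 := by exact_mod_cast hy'
  omega

lemma aeval_int (z : ℂ) (hz : IsIntegral ℤ z) (u : Polynomial ℤ) :
    IsIntegral ℤ (Polynomial.aeval z u) := by
  have := adjoin_le_integralClosure hz (Polynomial.aeval_mem_adjoin_singleton ℤ z (p := u))
  exact this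

lemma no_common_root {b n : ℕ} (hn : 1 ≤ n) (z : ℂ)
    (h0 : aeval z (S (b + 1) n) = 0) (h1 : aeval z (derivative (S (b + 1) n)) = 0) : False := by
  obtain ⟨g, hg⟩ := exists_pow n (b + 1)
  obtain ⟨h, hh⟩ := exists_h b n
  have e1 : ((aeval z) (P n) ^ 2 ^ b) ^ 2 + 2 * aeval z g = 0 := by
    have h2 : P n ^ 2 ^ (b+1) = (P n ^ 2 ^ b) ^ 2 := by
      rw [← pow_mul, ← pow_succ]
    rw [h2] at hg
    have := congrArg (aeval z) hg
    simp only [map_add, map_mul, map_pow, map_ofNat] at this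
    rw [← this]
    simpa [S, map_add] using h0
  have e2 : 1 + (aeval z) (P n) ^ 2 ^ b + 2 * aeval z h = 0 := by
    have := congrArg (aeval z) hh
    rw [h1] at this
    simp only [map_mul, map_add, map_pow, map_one, map_ofNat] at this
    have h2 : (2:ℂ) ≠ 0 := two_ne_zero
    exact (mul_eq_zero.mp this.symm).resolve_left h2
  have key : (2:ℂ)⁻¹ = aeval z (-g - 2 * h - 2 * h ^ 2) := by
    have hm : (2:ℂ) * (aeval z (-g - 2 * h - 2 * h ^ 2)) = 1 := by
      simp only [map_sub, map_mul, map_neg, map_pow, map_ofNat]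
      linear_combination -e1 + ((aeval z) (P n) ^ 2 ^ b - 1 - 2 * aeval z h) * e2
    exact (eq_inv_of_mul_eq_one_right hm).symm
  have hz : IsIntegral ℤ z := by
    refine ⟨S (b + 1) n, S_monic (by omega) hn, ?_⟩
    rw [← Polynomial.aeval_def]; exact h0
  exact not_int_half (key ▸ aeval_int z hz _)

section Orbit
variable {O : ℕ → ℂ}
lemma per_ge (o : ℕ → ℂ) (hdet : ∀ {m m' : ℕ}, o m = o m' → o (m + 1) = o (m' + 1))
    (a d : ℕ) {m : ℕ} (h : o (a + d) = o a) (hm : a ≤ m) : o (m + d) = o m := by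
  induction m, hm using Nat.le_induction with
  | base => exact h
  | succ m hm ih =>
    have h1 : m + 1 + d = (m + d) + 1 := by omega
    rw [h1]
    exact hdet ih

lemma per_mul (o : ℕ → ℂ) (hdet : ∀ {m m' : ℕ}, o m = o m' → o (m + 1) = o (m' + 1))
    (a d : ℕ) {m : ℕ} (h : o (a + d) = o a) (t : ℕ) (hm : a ≤ m) : o (m + t * d) = o m := by
  induction t with
  | zero => simp
  | succ t ih =>
    have h1 : m + (t + 1) * d = (m + t * d) + d := by ring
    have h2 : o ((m + t * d) + d) = o (m + t * d) := per_ge o hdet a d h (by omega)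
    rw [h1, h2, ih]

lemma min_dvd (o : ℕ → ℂ) (hdet : ∀ {m m' : ℕ}, o m = o m' → o (m + 1) = o (m' + 1))
    {a : ℕ} (hex : ∃ j, 1 ≤ j ∧ o (a + j) = o a) {j : ℕ} (hj1 : 1 ≤ j)
    (hj : o (a + j) = o a) : Nat.find hex ∣ j := by
  set k := Nat.find hex with hk
  obtain ⟨hk1, hkper⟩ : 1 ≤ k ∧ o (a + k) = o a := Nat.find_spec hex
  have hmod : o (a + j % k) = o a := by
    have h1 : a + j = (a + j % k) + (j / k) * k := by
      have h := Nat.div_add_mod j k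
      have h2 : (j / k) * k = k * (j / k) := Nat.mul_comm _ _
      omega
    rw [h1, per_mul o hdet a k hkper (j / k) (by omega)] at hj
    exact hj
  rcases Nat.eq_zero_or_pos (j % k) with h0 | hpos
  · exact Nat.dvd_of_mod_eq_zero h0
  · exfalso
    have hlt : j % k < k := Nat.mod_lt _ (by omega)
    exact absurd (Nat.find_min' hex ⟨hpos, hmod⟩) (by omega)

end Orbit




/-- the quotient polynomial over ℂ -/
noncomputable def sC (a n : ℕ) : Polynomial ℂ := (S a n).map (Int.castRingHom ℂ)

lemma qC_def (l n : ℕ) : qC l n = (P (l + n) - P l).map (Int.castRingHom ℂ) := rfl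

lemma qC_eval (l n : ℕ) (z : ℂ) :
    (qC l n).eval z = (pC (l + n)).eval z - (pC l).eval z := by
  rw [qC_def, Polynomial.map_sub, eval_sub, pC, pC]

lemma qC_eval_zero_iff (l n : ℕ) (z : ℂ) :
    (qC l n).eval z = 0 ↔ (pC (l + n)).eval z = (pC l).eval z := by
  rw [qC_eval, sub_eq_zero]

lemma sC_eval (a n : ℕ) (z : ℂ) :
    (sC a n).eval z = (pC (a + n)).eval z + (pC a).eval z := by
  rw [sC, S, Polynomial.map_add, eval_add, pC, pC]

lemma pC_eval_zero (z : ℂ) : (pC 0).eval z = 0 := by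
  simp [pC, P_zero]

lemma pC_eval_succ (m : ℕ) (z : ℂ) :
    (pC (m + 1)).eval z = ((pC m).eval z) ^ 2 + z := by
  simp [pC, P_succ, Polynomial.map_add, Polynomial.map_pow]

lemma hdet_pC (z : ℂ) {m m' : ℕ} (h : (pC m).eval z = (pC m').eval z) :
    (pC (m + 1)).eval z = (pC (m' + 1)).eval z := by
  rw [pC_eval_succ, pC_eval_succ, h]

section Classify
variable (z : ℂ)

/-- orbit of the critical point -/
noncomputable def orb (z : ℂ) : ℕ → ℂ := fun m => (pC m).eval z

lemma orb_det : ∀ {m m' : ℕ}, orb z m = orb z m' → orb z (m + 1) = orb z (m' + 1) :=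
  fun h => hdet_pC z h

lemma orb_zero : orb z 0 = 0 := pC_eval_zero z

theorem roots_char {a n : ℕ} (ha : 1 ≤ a) (hn : 1 ≤ n) :
    (sC a n).eval z = 0 ↔
      (∃ d, d ∣ Nat.gcd n a ∧ 1 ≤ d ∧ z ∈ hyp d) ∨
      (∃ k, k ∣ n ∧ 1 ≤ k ∧ z ∈ mis (a + 1) k) := by
  have hdet : ∀ {m m' : ℕ}, orb z m = orb z m' → orb z (m + 1) = orb z (m' + 1) := orb_det z
  have hseval : (sC a n).eval z = orb z (a + n) + orb z a := sC_eval a n z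
  constructor
  · intro h0
    rw [hseval] at h0
    -- o (a+1+n) = o (a+1)
    have h1 : orb z (a + 1 + n) = orb z (a + 1) := by
      have e1 : orb z (a + 1 + n) = (orb z (a + n)) ^ 2 + z := by
        have : a + 1 + n = (a + n) + 1 := by omega
        rw [this]; exact pC_eval_succ (a + n) z
      have e2 : orb z (a + 1) = (orb z a) ^ 2 + z := pC_eval_succ a z
      have e3 : orb z (a + n) = -orb z a := by linear_combination h0
      rw [e1, e2, e3, neg_sq]
    have hex : ∃ j, 1 ≤ j ∧ orb z (a + 1 + j) = orb z (a + 1) := ⟨n, hn, h1⟩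
    set k := Nat.find hex with hkdef
    obtain ⟨hk1, hkp⟩ : 1 ≤ k ∧ orb z (a + 1 + k) = orb z (a + 1) := Nat.find_spec hex
    have hkn : k ∣ n := min_dvd (orb z) hdet hex hn h1
    by_cases hB : orb z (a + k) = orb z a
    · -- hyperbolic case
      left
      have hoa : orb z a = 0 := by
        have han : orb z (a + n) = orb z a := by
          have := per_mul (orb z) hdet a k hB (n / k) (le_refl a)
          rwa [Nat.div_mul_cancel hkn] at this
        rw [han] at h0
        linear_combination h0 / 2
      have hex0 : ∃ j, 1 ≤ j ∧ orb z (0 + j) = orb z 0 := by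
        refine ⟨a, ha, ?_⟩
        rw [orb_zero, Nat.zero_add, hoa]
      set d := Nat.find hex0 with hddef
      obtain ⟨hd1, hdp⟩ : 1 ≤ d ∧ orb z (0 + d) = orb z 0 := Nat.find_spec hex0
      have hda : d ∣ a := min_dvd (orb z) hdet hex0 ha (by rw [orb_zero, Nat.zero_add, hoa])
      have hkd : k ∣ d := by
        refine min_dvd (orb z) hdet hex hd1 ?_
        exact per_ge (orb z) hdet 0 d hdp (Nat.zero_le _)
      have hdk : d ∣ k := by
        have hak : orb z (0 + (a + k)) = orb z 0 := by
          rw [Nat.zero_add, hB, hoa, orb_zero]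
        have := min_dvd (orb z) hdet hex0 (by omega) hak
        exact (Nat.dvd_add_right hda).mp this
      have hdk' : d = k := Nat.dvd_antisymm hdk hkd
      refine ⟨d, Nat.dvd_gcd (hdk' ▸ hkn) hda, hd1, ?_, ?_⟩
      · show (pC d).eval z = 0
        have := hdp; rwa [Nat.zero_add, orb_zero] at this
      · intro j hjd hjne
        intro hj0
        have hj1 : 1 ≤ j := by
          rcases Nat.eq_zero_or_pos j with rfl | h
          · exact absurd (Nat.eq_zero_of_zero_dvd hjd) (by omega)
          · exact h
        have : d ∣ j := by
          refine min_dvd (orb z) hdet hex0 hj1 ?_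
          rw [Nat.zero_add, orb_zero]; exact hj0
        exact hjne (Nat.dvd_antisymm hjd this)
    · -- Misiurewicz case
      right
      refine ⟨k, hkn, hk1, ?_, ?_, ?_⟩
      · show (qC (a + 1) k).eval z = 0
        rw [qC_eval_zero_iff]; exact hkp
      · show (qC (a + 1 - 1) k).eval z ≠ 0
        have : a + 1 - 1 = a := by omega
        rw [this, Ne, qC_eval_zero_iff]; exact hB
      · intro j hjk hjne
        rw [Ne, qC_eval_zero_iff]
        intro hj0
        have hj1 : 1 ≤ j := by
          rcases Nat.eq_zero_or_pos j with rfl | h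
          · exact absurd (Nat.eq_zero_of_zero_dvd hjk) (by omega)
          · exact h
        have : k ∣ j := min_dvd (orb z) hdet hex hj1 hj0
        exact hjne (Nat.dvd_antisymm hjk this)
  · rintro (⟨d, hdg, hd1, hz0, _⟩ | ⟨k, hkn, hk1, hz0, hz1, _⟩)
    · -- hyperbolic root
      have hdn : d ∣ n := dvd_trans hdg (Nat.gcd_dvd_left n a)
      have hda : d ∣ a := dvd_trans hdg (Nat.gcd_dvd_right n a)
      have hper : orb z (0 + d) = orb z 0 := by
        rw [Nat.zero_add, orb_zero]; exact hz0
      have hoa : orb z a = 0 := by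
        have h5 := per_mul (orb z) hdet 0 d hper (a / d) (le_refl 0)
        rw [Nat.zero_add, Nat.div_mul_cancel hda, orb_zero] at h5
        exact h5
      have han : orb z (a + n) = orb z a := by
        have := per_mul (orb z) hdet 0 d hper (n / d) (Nat.zero_le a)
        rwa [Nat.div_mul_cancel hdn] at this
      rw [hseval, han, hoa]; ring
    · -- Misiurewicz root
      have e0 : orb z (a + 1 + k) = orb z (a + 1) := (qC_eval_zero_iff _ _ _).mp hz0
      have e1 : orb z (a + k) ≠ orb z a := by
        have : a + 1 - 1 = a := by omega
        rw [this, Ne, qC_eval_zero_iff] at hz1; exact hz1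
      have h1 : orb z (a + 1 + n) = orb z (a + 1) := by
        have := per_mul (orb z) hdet (a + 1) k e0 (n / k) (le_refl (a + 1))
        rwa [Nat.div_mul_cancel hkn] at this
      have hsq : (orb z (a + n)) ^ 2 = (orb z a) ^ 2 := by
        have u1 : orb z (a + n + 1) = (orb z (a + n)) ^ 2 + z := pC_eval_succ (a + n) z
        have u2 : orb z (a + 1) = (orb z a) ^ 2 + z := pC_eval_succ a z
        have u3 : a + n + 1 = a + 1 + n := by omega
        rw [u3, h1, u2] at u1
        linear_combination -u1
      have hne : orb z (a + n) ≠ orb z a := by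
        intro heq
        apply e1
        have s1 : orb z ((a + k) + n) = orb z (a + k) :=
          per_ge (orb z) hdet a n heq (by omega)
        have s2 : orb z ((a + n) + k) = orb z (a + n) :=
          per_ge (orb z) hdet (a + 1) k e0 (by omega)
        have s3 : a + k + n = a + n + k := by omega
        rw [← s1, s3, s2, heq]
      have : (orb z (a + n) - orb z a) * (orb z (a + n) + orb z a) = 0 := by linear_combination hsq
      rcases mul_eq_zero.mp this with h | h
      · exact absurd (sub_eq_zero.mp h) hne
      · rw [hseval]; exact h

end Classify

section Disjoint
variable (z : ℂ)

lemma hyp_exact {d : ℕ} (hd1 : 1 ≤ d) (hz : z ∈ hyp d) {j : ℕ} (hj1 : 1 ≤ j)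
    (hj : (pC j).eval z = 0) : d ∣ j := by
  have hdet : ∀ {m m' : ℕ}, orb z m = orb z m' → orb z (m + 1) = orb z (m' + 1) := orb_det z
  obtain ⟨hz0, hzmin⟩ := hz
  have hex0 : ∃ i, 1 ≤ i ∧ orb z (0 + i) = orb z 0 := by
    refine ⟨d, hd1, ?_⟩
    rw [Nat.zero_add, orb_zero]; exact hz0
  set e := Nat.find hex0 with hedef
  obtain ⟨he1, hep⟩ : 1 ≤ e ∧ orb z (0 + e) = orb z 0 := Nat.find_spec hex0
  have hed : e ∣ d := by
    refine min_dvd (orb z) hdet hex0 hd1 ?_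
    rw [Nat.zero_add, orb_zero]; exact hz0
  have heeq : e = d := by
    by_contra hne
    refine hzmin e hed hne ?_
    have := hep; rwa [Nat.zero_add, orb_zero] at this
  rw [← heeq]
  refine min_dvd (orb z) hdet hex0 hj1 ?_
  rw [Nat.zero_add, orb_zero]; exact hj

lemma mis_exact {a k : ℕ} (hk1 : 1 ≤ k) (hz : z ∈ mis (a + 1) k) {j : ℕ} (hj1 : 1 ≤ j)
    (hj : (qC (a + 1) j).eval z = 0) : k ∣ j := by
  have hdet : ∀ {m m' : ℕ}, orb z m = orb z m' → orb z (m + 1) = orb z (m' + 1) := orb_det z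
  obtain ⟨hz0, hz1, hzmin⟩ := hz
  have e0 : orb z (a + 1 + k) = orb z (a + 1) := (qC_eval_zero_iff _ _ _).mp hz0
  have hex : ∃ i, 1 ≤ i ∧ orb z (a + 1 + i) = orb z (a + 1) := ⟨k, hk1, e0⟩
  set e := Nat.find hex with hedef
  obtain ⟨he1, hep⟩ : 1 ≤ e ∧ orb z (a + 1 + e) = orb z (a + 1) := Nat.find_spec hex
  have hek : e ∣ k := min_dvd (orb z) hdet hex hk1 e0
  have heeq : e = k := by
    by_contra hne
    refine hzmin e hek hne ?_
    rw [qC_eval_zero_iff]; exact hep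
  rw [← heeq]
  exact min_dvd (orb z) hdet hex hj1 ((qC_eval_zero_iff _ _ _).mp hj)

lemma hyp_disjoint {d d' : ℕ} (hd1 : 1 ≤ d) (hd1' : 1 ≤ d') (hne : d ≠ d')
    (h : z ∈ hyp d) (h' : z ∈ hyp d') : False := by
  have h1 : d ∣ d' := hyp_exact z hd1 h hd1' h'.1
  have h2 : d' ∣ d := hyp_exact z hd1' h' hd1 h.1
  exact hne (Nat.dvd_antisymm h1 h2)

lemma mis_disjoint {a k k' : ℕ} (hk1 : 1 ≤ k) (hk1' : 1 ≤ k') (hne : k ≠ k')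
    (h : z ∈ mis (a + 1) k) (h' : z ∈ mis (a + 1) k') : False := by
  have h1 : k ∣ k' := mis_exact z hk1 h hk1' h'.1
  have h2 : k' ∣ k := mis_exact z hk1' h' hk1 h.1
  exact hne (Nat.dvd_antisymm h1 h2)

lemma hyp_mis_disjoint {a d k : ℕ} (hd1 : 1 ≤ d) (hk1 : 1 ≤ k)
    (h : z ∈ hyp d) (h' : z ∈ mis (a + 1) k) : False := by
  have hdet : ∀ {m m' : ℕ}, orb z m = orb z m' → orb z (m + 1) = orb z (m' + 1) := orb_det z
  have hper : orb z (0 + d) = orb z 0 := by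
    rw [Nat.zero_add, orb_zero]; exact h.1
  have e0 : orb z (a + 1 + k) = orb z (a + 1) := (qC_eval_zero_iff _ _ _).mp h'.1
  have e1 : orb z (a + k) ≠ orb z a := by
    have h2 := h'.2.1
    have h3 : a + 1 - 1 = a := by omega
    rw [h3, Ne, qC_eval_zero_iff] at h2; exact h2
  apply e1
  have s1 : orb z ((a + k) + d) = orb z (a + k) := per_ge (orb z) hdet 0 d hper (Nat.zero_le _)
  have s2 : orb z ((a + d) + k) = orb z (a + d) := per_ge (orb z) hdet (a + 1) k e0 (by omega)
  have s3 : orb z (a + d) = orb z a := per_ge (orb z) hdet 0 d hper (Nat.zero_le _)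
  have s4 : a + k + d = a + d + k := by omega
  rw [← s3, ← s2, ← s4, s1]

end Disjoint


lemma pC_ne_zero {d : ℕ} (hd : 1 ≤ d) : pC d ≠ 0 :=
  ((P_monic hd).map (Int.castRingHom ℂ)).ne_zero

lemma map_int_injective : Function.Injective (Polynomial.map (Int.castRingHom ℂ)) :=
  Polynomial.map_injective _ (fun _ _ h => Int.cast_injective h)

lemma qC_ne_zero {l k : ℕ} (hl : 1 ≤ l) (hk : 1 ≤ k) : qC l k ≠ 0 := by
  rw [qC, Q]
  intro h
  have := map_int_injective (h.trans (Polynomial.map_zero _).symm)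
  exact Q_ne_zero hl hk this

lemma hyp_finite {d : ℕ} (hd : 1 ≤ d) : (hyp d).Finite :=
  (finite_setOf_isRoot (pC_ne_zero hd)).subset (fun _ hz => hz.1)

lemma mis_finite {l k : ℕ} (hl : 1 ≤ l) (hk : 1 ≤ k) : (mis l k).Finite :=
  (finite_setOf_isRoot (qC_ne_zero hl hk)).subset (fun _ hz => hz.1)

open scoped Classical in
noncomputable def hypF (d : ℕ) : Finset ℂ :=
  if h : (hyp d).Finite then h.toFinset else ∅

open scoped Classical in
noncomputable def misF (l k : ℕ) : Finset ℂ :=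
  if h : (mis l k).Finite then h.toFinset else ∅

open scoped Classical in
lemma mem_hypF {d : ℕ} (hd : 1 ≤ d) {r : ℂ} : r ∈ hypF d ↔ r ∈ hyp d := by
  rw [hypF, dif_pos (hyp_finite hd), Set.Finite.mem_toFinset]

open scoped Classical in
lemma mem_misF {l k : ℕ} (hl : 1 ≤ l) (hk : 1 ≤ k) {r : ℂ} : r ∈ misF l k ↔ r ∈ mis l k := by
  rw [misF, dif_pos (mis_finite hl hk), Set.Finite.mem_toFinset]

open scoped Classical in
lemma hPoly_eq {d : ℕ} (hd : 1 ≤ d) : hPoly d = ∏ r ∈ hypF d, (X - C r) := by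
  rw [hPoly, hypF, dif_pos (hyp_finite hd)]
  exact finprod_mem_eq_finite_toFinset_prod _ _

open scoped Classical in
lemma mPoly_eq {l k : ℕ} (hl : 1 ≤ l) (hk : 1 ≤ k) : mPoly l k = ∏ r ∈ misF l k, (X - C r) := by
  rw [mPoly, misF, dif_pos (mis_finite hl hk)]
  exact finprod_mem_eq_finite_toFinset_prod _ _

lemma sC_monic {a n : ℕ} (ha : 1 ≤ a) (hn : 1 ≤ n) : (sC a n).Monic :=
  (S_monic ha hn).map _

lemma sC_roots_nodup {b n : ℕ} (hn : 1 ≤ n) : (sC (b + 1) n).roots.Nodup := by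
  classical
  rw [Multiset.nodup_iff_count_le_one]
  intro r
  rw [count_roots]
  by_contra hgt
  have h2 : 1 < (sC (b + 1) n).rootMultiplicity r := by omega
  rw [one_lt_rootMultiplicity_iff_isRoot (sC_monic (by omega) hn).ne_zero] at h2
  obtain ⟨h0, h1⟩ := h2
  refine no_common_root (b := b) hn r ?_ ?_
  · rw [aeval_def, ← eval_map, algebraMap_int_eq]
    exact h0
  · rw [aeval_def, ← eval_map, algebraMap_int_eq, ← derivative_map]
    exact h1

theorem sC_factor {b n : ℕ} (hn : 1 ≤ n) :
    sC (b + 1) n =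
      (∏ k ∈ (Nat.gcd n (b + 1)).divisors, hPoly k) * ∏ k ∈ n.divisors, mPoly (b + 2) k := by
  classical
  have ha : 1 ≤ b + 1 := by omega
  have hmonic := sC_monic ha hn
  have hsplit : sC (b + 1) n = ((sC (b + 1) n).roots.map fun r => X - C r).prod :=
    (IsAlgClosed.splits _).eq_prod_roots_of_monic hmonic
  have hprod : sC (b + 1) n = ∏ r ∈ (sC (b + 1) n).roots.toFinset, (X - C r) := by
    conv_lhs => rw [hsplit]
    rw [Finset.prod_eq_multiset_prod, Multiset.toFinset_val,
      Multiset.dedup_eq_self.mpr (sC_roots_nodup hn)]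
  have hgcd_pos : Nat.gcd n (b + 1) ≠ 0 := by
    intro h
    exact absurd (Nat.eq_zero_of_gcd_eq_zero_right h) (by omega)
  have hroots : (sC (b + 1) n).roots.toFinset =
      ((Nat.gcd n (b + 1)).divisors.biUnion hypF) ∪ (n.divisors.biUnion (misF (b + 2))) := by
    ext r
    rw [Multiset.mem_toFinset, mem_roots hmonic.ne_zero, Finset.mem_union, IsRoot.def]
    rw [roots_char r ha hn]
    constructor
    · rintro (⟨d, hdg, hd1, hz⟩ | ⟨k, hkn, hk1, hz⟩)
      · exact Or.inl (Finset.mem_biUnion.mpr ⟨d, Nat.mem_divisors.mpr ⟨hdg, hgcd_pos⟩,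
          (mem_hypF hd1).mpr hz⟩)
      · exact Or.inr (Finset.mem_biUnion.mpr ⟨k, Nat.mem_divisors.mpr ⟨hkn, by omega⟩,
          (mem_misF (by omega) hk1).mpr hz⟩)
    · rintro (h | h)
      · obtain ⟨d, hd, hr⟩ := Finset.mem_biUnion.mp h
        rw [Nat.mem_divisors] at hd
        have hd1 : 1 ≤ d := Nat.pos_of_dvd_of_pos hd.1 (Nat.pos_of_ne_zero hgcd_pos)
        exact Or.inl ⟨d, hd.1, hd1, (mem_hypF hd1).mp hr⟩
      · obtain ⟨k, hk, hr⟩ := Finset.mem_biUnion.mp h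
        rw [Nat.mem_divisors] at hk
        have hk1 : 1 ≤ k := Nat.pos_of_dvd_of_pos hk.1 (by omega)
        exact Or.inr ⟨k, hk.1, hk1, (mem_misF (by omega) hk1).mp hr⟩
  have hdisj : Disjoint ((Nat.gcd n (b + 1)).divisors.biUnion hypF)
      (n.divisors.biUnion (misF (b + 2))) := by
    rw [Finset.disjoint_left]
    intro r hr1 hr2
    obtain ⟨d, hd, hrd⟩ := Finset.mem_biUnion.mp hr1
    obtain ⟨k, hk, hrk⟩ := Finset.mem_biUnion.mp hr2
    rw [Nat.mem_divisors] at hd hk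
    have hd1 : 1 ≤ d := Nat.pos_of_dvd_of_pos hd.1 (Nat.pos_of_ne_zero hgcd_pos)
    have hk1 : 1 ≤ k := Nat.pos_of_dvd_of_pos hk.1 (by omega)
    exact hyp_mis_disjoint r hd1 hk1 ((mem_hypF hd1).mp hrd)
      ((mem_misF (by omega) hk1).mp hrk)
  have hpd1 : Set.PairwiseDisjoint ↑((Nat.gcd n (b + 1)).divisors) hypF := by
    intro x hx y hy hxy
    simp only [Finset.coe_sort_coe, Finset.mem_coe, Nat.mem_divisors] at hx hy
    have hx1 : 1 ≤ x := Nat.pos_of_dvd_of_pos hx.1 (Nat.pos_of_ne_zero hgcd_pos)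
    have hy1 : 1 ≤ y := Nat.pos_of_dvd_of_pos hy.1 (Nat.pos_of_ne_zero hgcd_pos)
    rw [Function.onFun, Finset.disjoint_left]
    intro r hrx hry
    exact hyp_disjoint r hx1 hy1 hxy ((mem_hypF hx1).mp hrx) ((mem_hypF hy1).mp hry)
  have hpd2 : Set.PairwiseDisjoint ↑(n.divisors) (misF (b + 2)) := by
    intro x hx y hy hxy
    simp only [Finset.coe_sort_coe, Finset.mem_coe, Nat.mem_divisors] at hx hy
    have hx1 : 1 ≤ x := Nat.pos_of_dvd_of_pos hx.1 (by omega)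
    have hy1 : 1 ≤ y := Nat.pos_of_dvd_of_pos hy.1 (by omega)
    rw [Function.onFun, Finset.disjoint_left]
    intro r hrx hry
    exact mis_disjoint (a := b + 1) r hx1 hy1 hxy
      ((mem_misF (by omega) hx1).mp hrx) ((mem_misF (by omega) hy1).mp hry)
  rw [hprod, hroots, Finset.prod_union hdisj, Finset.prod_biUnion hpd1, Finset.prod_biUnion hpd2]
  congr 1
  · refine Finset.prod_congr rfl (fun d hd => ?_)
    rw [Nat.mem_divisors] at hd
    exact (hPoly_eq (Nat.pos_of_dvd_of_pos hd.1 (Nat.pos_of_ne_zero hgcd_pos))).symm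
  · refine Finset.prod_congr rfl (fun k hk => ?_)
    rw [Nat.mem_divisors] at hk
    exact (mPoly_eq (by omega) (Nat.pos_of_dvd_of_pos hk.1 (by omega))).symm

lemma sC_eq_add (a n : ℕ) : sC a n = pC (a + n) + pC a := by
  rw [sC, S, Polynomial.map_add, pC, pC]

lemma qC_factor (b n : ℕ) : qC (b + 2) n = qC (b + 1) n * sC (b + 1) n := by
  rw [qC, qC, Q, Q, sC, ← Polynomial.map_mul]
  congr 1
  have h : b + 2 = (b + 1) + 1 := by omega
  rw [h]
  exact Q_factor (b + 1) n


/-- The quotient `s l n = q l n / q (l-1) n` equals `p (l+n-1) + p (l-1)` and factors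
over `ℂ` as `(∏_{k ∣ gcd(n, l-1)} h k) * (∏_{k ∣ n} m l k)`. -/
theorem s_formula (l n : ℕ) (hl : 2 ≤ l) (hn : 1 ≤ n) :
    qC l n / qC (l - 1) n = pC (l + n - 1) + pC (l - 1) ∧
    qC l n / qC (l - 1) n =
      (∏ k ∈ (Nat.gcd n (l - 1)).divisors, hPoly k) * ∏ k ∈ n.divisors, mPoly l k := by
  obtain ⟨b, rfl⟩ : ∃ b, l = b + 2 := ⟨l - 2, by omega⟩
  have h1 : b + 2 - 1 = b + 1 := by omega
  have h2 : b + 2 + n - 1 = b + 1 + n := by omega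
  have hne : qC (b + 1) n ≠ 0 := qC_ne_zero (by omega) hn
  have hdiv : qC (b + 2) n / qC (b + 1) n = sC (b + 1) n := by
    rw [qC_factor]
    exact mul_div_cancel_left₀ _ hne
  rw [h1, h2]
  refine ⟨?_, ?_⟩
  · rw [hdiv, sC_eq_add]
  · rw [hdiv]
    exact sC_factor hn
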